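/- arXiv:2403.12620 — 5 statements merged into one kernel-verified Lean document; each statement's English description precedes it below -/
import Mathlib

section
/- Let a, b ∈ ℝ, σ₁ > 0, σ₂ > 0, and ω ∈ ℝ. With respect to the product measure N(a, σ₁²) ⊗ N(b, σ₁²) ⊗ Exp(1/(2σ₂²)) on ℝ² × [0, ∞), the characteristic function of T = x² + y² − u satisfies ∫ exp(i ω (x² + y² − u)) dμ(x, y, u) = exp(i ω (a² + b²)/(1 − 2iωσ₁²)) / ((1 − 2iωσ₁²)(1 + 2iωσ₂²)). -/
/-!
The three coordinates are independent, so the integral factorises. Completing the square turns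
`∫ exp (i ω x²) dN(μ, v)` into a complex Gaussian integral, equal to
`(1 - 2 i ω v) ^ (-1/2) · exp (i ω μ² / (1 - 2 i ω v))`; for two coordinates with the same
variance the square roots multiply to `(1 - 2 i ω v)⁻¹`. The exponential coordinate contributes
`∫ exp (-i ω u) dExp(r) = r / (r + i ω)`, which is `1 / (1 + 2 i ω σ₂²)` at `r = 1 / (2 σ₂²)`.
-/

open MeasureTheory ProbabilityTheory Complex Real Set
open scoped NNReal

lemma Complex.ofReal_mul_cpow {r : ℝ} (hr : 0 < r) {z : ℂ} (hz : z ≠ 0) (s : ℂ) :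
    ((r : ℂ) * z) ^ s = (r : ℂ) ^ s * z ^ s := by
  have hr' : (r : ℂ) ≠ 0 := ofReal_ne_zero.2 hr.ne'
  rw [cpow_def_of_ne_zero (mul_ne_zero hr' hz), log_ofReal_mul hr hz, cpow_def_of_ne_zero hr',
    cpow_def_of_ne_zero hz, ← ofReal_log hr.le, add_mul, Complex.exp_add]

lemma one_sub_two_mul_I_mul_ne_zero (ω v : ℝ) : (1 - 2 * I * ω * v : ℂ) ≠ 0 := by
  intro h
  simpa using congrArg re h

lemma integral_cexp_mul_sq_gaussianReal (μ ω : ℝ) (v : ℝ≥0) :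
    ∫ x, cexp (I * ω * x ^ 2) ∂gaussianReal μ v =
      (1 - 2 * I * ω * v) ^ (-1 / 2 : ℂ) * cexp (I * ω * μ ^ 2 / (1 - 2 * I * ω * v)) := by
  by_cases hv : v = 0
  · simp [hv]
  set w : ℂ := 1 - 2 * I * ω * v with hw
  have hv' : (v : ℂ) ≠ 0 := by simpa using hv
  have hw0 : w ≠ 0 := one_sub_two_mul_I_mul_ne_zero ω v
  have hBw : I * ω - (2 * (v : ℂ))⁻¹ = -w / (2 * v) := by rw [hw]; field_simp; ring
  have hv0 : (0 : ℝ) < v := NNReal.coe_pos.2 (pos_iff_ne_zero.2 hv)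
  have hpos : 0 < 2 * π * v := by positivity
  have hB : (I * ω - (2 * (v : ℂ))⁻¹).re < 0 := by simp [hv0]
  have hsqrt : ((2 * π * v : ℝ) : ℂ) ^ (1 / 2 : ℂ) = (√(2 * π * v) : ℝ) := by
    rw [sqrt_eq_rpow, ofReal_cpow hpos.le]
    norm_num
  calc ∫ x, cexp (I * ω * x ^ 2) ∂gaussianReal μ v
    _ = (√(2 * π * v) : ℂ)⁻¹ * ∫ x : ℝ,
          cexp ((I * ω - (2 * (v : ℂ))⁻¹) * x ^ 2 + (μ / v) * x + -μ ^ 2 / (2 * v)) := by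
      simp_rw [integral_gaussianReal_eq_integral_smul hv, Complex.real_smul, gaussianPDFReal]
      push_cast
      simp_rw [mul_assoc, integral_const_mul, ← Complex.exp_add]
      congr with x
      congr 1
      ring
    _ = (√(2 * π * v) : ℂ)⁻¹ * (((2 * π * v : ℝ) : ℂ) * w⁻¹) ^ (1 / 2 : ℂ)
          * cexp (I * ω * μ ^ 2 / w) := by
      rw [integral_cexp_quadratic hB, hBw, ← mul_assoc]
      congr 3
      · push_cast; field_simp
      · field_simp; ring
    _ = w ^ (-1 / 2 : ℂ) * cexp (I * ω * μ ^ 2 / w) := by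
      have harg : w.arg ≠ π := by rw [Ne, arg_eq_pi_iff]; simp [hw]
      rw [ofReal_mul_cpow hpos (inv_ne_zero hw0),
        inv_cpow _ _ harg, neg_div, cpow_neg, hsqrt, ← mul_assoc,
        inv_mul_cancel₀ (ofReal_ne_zero.2 (sqrt_pos.2 hpos).ne'), one_mul]

lemma integral_cexp_mul_sq_add_sq_gaussianReal_prod (μ₁ μ₂ ω : ℝ) (v : ℝ≥0) :
    ∫ p : ℝ × ℝ, cexp (I * ω * (p.1 ^ 2 + p.2 ^ 2)) ∂(gaussianReal μ₁ v).prod (gaussianReal μ₂ v) =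
      cexp (I * ω * (μ₁ ^ 2 + μ₂ ^ 2) / (1 - 2 * I * ω * v)) / (1 - 2 * I * ω * v) := by
  have hw0 := one_sub_two_mul_I_mul_ne_zero ω v
  simp_rw [mul_add, Complex.exp_add]
  rw [integral_prod_mul (fun x : ℝ ↦ cexp (I * ω * x ^ 2)) (fun y : ℝ ↦ cexp (I * ω * y ^ 2)),
    integral_cexp_mul_sq_gaussianReal, integral_cexp_mul_sq_gaussianReal]
  have hsq : (1 - 2 * I * ω * v) ^ (-1 / 2 : ℂ) * (1 - 2 * I * ω * v) ^ (-1 / 2 : ℂ) =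
      (1 - 2 * I * ω * v)⁻¹ := by
    rw [← cpow_add _ _ hw0, show (-1 / 2 + -1 / 2 : ℂ) = -1 by norm_num, cpow_neg_one]
  rw [add_div, Complex.exp_add, div_eq_mul_inv (cexp _ * cexp _), ← hsq]
  ring

lemma integral_expMeasure_eq_setIntegral {E : Type*} [NormedAddCommGroup E] [NormedSpace ℝ E]
    {r : ℝ} (hr : 0 ≤ r) (f : ℝ → E) :
    ∫ x, f x ∂expMeasure r = ∫ x in Ioi 0, (r * rexp (-(r * x))) • f x := by
  have hpdf (x : ℝ) : (gammaPDF 1 r x).toReal • f x =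
      (Ici 0).indicator (fun x ↦ (r * rexp (-(r * x))) • f x) x := by
    rw [gammaPDF, gammaPDFReal]
    by_cases hx : 0 ≤ x
    · simp [hx, ENNReal.toReal_ofReal (by positivity : 0 ≤ r * rexp (-(r * x)))]
    · simp [hx]
  rw [expMeasure, gammaMeasure, integral_withDensity_eq_integral_toReal_smul (f := gammaPDF 1 r)
    (measurable_gammaPDFReal 1 r).ennreal_ofReal (ae_of_all _ fun _ ↦ ENNReal.ofReal_lt_top)]
  simp_rw [hpdf]
  rw [integral_indicator measurableSet_Ici, integral_Ici_eq_integral_Ioi]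

lemma integral_cexp_mul_expMeasure {r : ℝ} (hr : 0 < r) (ω : ℝ) :
    ∫ u, cexp (I * ω * u) ∂expMeasure r = r / (r - I * ω) := by
  have hre : (I * ω - r : ℂ).re < 0 := by simpa using hr
  calc ∫ u, cexp (I * ω * u) ∂expMeasure r
      = r * ∫ u : ℝ in Ioi 0, cexp ((I * ω - r) * u) := by
        rw [integral_expMeasure_eq_setIntegral hr.le, ← integral_const_mul]
        refine setIntegral_congr_fun measurableSet_Ioi fun u _ ↦ ?_
        simp only [real_smul, ofReal_mul, ofReal_exp, ofReal_neg, mul_assoc, ← Complex.exp_add]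
        ring_nf
    _ = r / (r - I * ω) := by
        rw [integral_exp_mul_complex_Ioi hre, ← neg_sub (r : ℂ)]
        field_simp
        simp

theorem diff_chiSq_charFun_general (a b σ₁ σ₂ ω : ℝ) (hσ₂ : 0 < σ₂) :
    ∫ p : (ℝ × ℝ) × ℝ,
        Complex.exp (Complex.I * (ω : ℂ) * ((p.1.1 ^ 2 + p.1.2 ^ 2 - p.2 : ℝ) : ℂ))
        ∂(((gaussianReal a (σ₁ ^ 2).toNNReal).prod (gaussianReal b (σ₁ ^ 2).toNNReal)).prod
            (expMeasure (1 / (2 * σ₂ ^ 2)))) =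
      Complex.exp (Complex.I * (ω : ℂ) * ((a : ℂ) ^ 2 + (b : ℂ) ^ 2) /
          (1 - 2 * Complex.I * (ω : ℂ) * ((σ₁ : ℂ) ^ 2))) /
        ((1 - 2 * Complex.I * (ω : ℂ) * ((σ₁ : ℂ) ^ 2)) *
          (1 + 2 * Complex.I * (ω : ℂ) * ((σ₂ : ℂ) ^ 2))) := by
  have hr : 0 < 1 / (2 * σ₂ ^ 2) := by positivity
  have := isProbabilityMeasure_expMeasure hr
  have hσ₂' : (σ₂ : ℂ) ≠ 0 := ofReal_ne_zero.2 hσ₂.ne'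
  have hsplit (p : (ℝ × ℝ) × ℝ) :
      cexp (I * ω * ((p.1.1 ^ 2 + p.1.2 ^ 2 - p.2 : ℝ) : ℂ)) =
        cexp (I * ω * (p.1.1 ^ 2 + p.1.2 ^ 2)) * cexp (I * (-ω : ℝ) * p.2) := by
    rw [← Complex.exp_add]; push_cast; ring_nf
  simp_rw [hsplit]
  rw [integral_prod_mul (fun q : ℝ × ℝ ↦ cexp (I * ω * (q.1 ^ 2 + q.2 ^ 2)))
      (fun u : ℝ ↦ cexp (I * (-ω : ℝ) * u)),
    integral_cexp_mul_sq_add_sq_gaussianReal_prod, integral_cexp_mul_expMeasure hr,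
    Real.coe_toNNReal _ (sq_nonneg σ₁)]
  push_cast
  field_simp
  ring

/-- Characteristic function of `T = x² + y² - u`, the difference between a scaled
noncentral χ²(2) statistic (built from two Gaussians) and an independent exponential
(scaled central χ²(2)) variable:
`∫ exp(iω(x²+y²-u)) dμ = exp(iω(a²+b²)/(1-2iωσ₁²)) / ((1-2iωσ₁²)(1+2iωσ₂²))`. -/
theorem diff_chiSq_charFun (a b σ₁ σ₂ ω : ℝ) (hσ₁ : 0 < σ₁) (hσ₂ : 0 < σ₂) :
    ∫ p : (ℝ × ℝ) × ℝ,
        Complex.exp (Complex.I * (ω : ℂ) * ((p.1.1 ^ 2 + p.1.2 ^ 2 - p.2 : ℝ) : ℂ))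
        ∂(((gaussianReal a (σ₁ ^ 2).toNNReal).prod (gaussianReal b (σ₁ ^ 2).toNNReal)).prod
            (expMeasure (1 / (2 * σ₂ ^ 2)))) =
      Complex.exp (Complex.I * (ω : ℂ) * ((a : ℂ) ^ 2 + (b : ℂ) ^ 2) /
          (1 - 2 * Complex.I * (ω : ℂ) * ((σ₁ : ℂ) ^ 2))) /
        ((1 - 2 * Complex.I * (ω : ℂ) * ((σ₁ : ℂ) ^ 2)) *
          (1 + 2 * Complex.I * (ω : ℂ) * ((σ₂ : ℂ) ^ 2))) :=
  diff_chiSq_charFun_general a b σ₁ σ₂ ω hσ₂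
end

section
/- Let a, b ∈ ℝ, σ₁ > 0, σ₂ > 0, and let μ = N(a, σ₁²) ⊗ N(b, σ₁²) ⊗ Exp(1/(2σ₂²)) on ℝ² × [0, ∞). Then for every t ≤ 0, μ{(x, y, u) : x² + y² − u ≤ t} = (σ₂²/(σ₁² + σ₂²)) · exp(t/(2σ₂²)) · exp(−(a² + b²)/(2(σ₁² + σ₂²))). -/
/-!
Conditioning on `(x, y)`, the event is `u ≥ x² + y² - t`, and since `t ≤ 0` this threshold is
nonnegative, so the exponential tail gives `e^{rt} e^{-r x²} e^{-r y²}` with `r = 1/(2σ₂²)`.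
Integrating against the Gaussians factors over `x` and `y`, and each factor is computed by
completing the square: `e^{-c x²}` times the density of `N(m, v)` is a multiple of the density of
`N(m/(1+2cv), v/(1+2cv))`.
-/

open MeasureTheory ProbabilityTheory Real Set
open scoped NNReal ENNReal

lemma expMeasure_Ici {r : ℝ} (hr : 0 < r) {s : ℝ} (hs : 0 ≤ s) :
    expMeasure r (Ici s) = ENNReal.ofReal (exp (-(r * s))) := by
  have := isProbabilityMeasure_expMeasure hr
  have hatom : expMeasure r {s} = 0 :=
    withDensity_absolutelyContinuous _ _ (measure_singleton s)
  have hexp_le : exp (-(r * s)) ≤ 1 := exp_le_one_iff.mpr (by nlinarith)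
  rw [← measure_congr (Ioi_ae_eq_Ici' hatom), ← compl_Iic, prob_compl_eq_one_sub measurableSet_Iic,
    ← ofReal_cdf, cdf_expMeasure_eq hr, if_pos hs, ← ENNReal.ofReal_one,
    ← ENNReal.ofReal_sub _ (by linarith), sub_sub_cancel]

lemma gaussianPDFReal_mul_exp_neg_mul_sq (m : ℝ) (v : ℝ≥0) {c : ℝ} (hc : 0 ≤ c) (x : ℝ) :
    gaussianPDFReal m v x * exp (-(c * x ^ 2)) =
      (√(1 + 2 * c * v))⁻¹ * exp (-(c * m ^ 2 / (1 + 2 * c * v))) *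
        gaussianPDFReal (m / (1 + 2 * c * v)) (v / (1 + 2 * c * v)).toNNReal x := by
  rw [gaussianPDFReal, gaussianPDFReal, Real.coe_toNNReal _ (by positivity)]
  rcases eq_or_ne (v : ℝ) 0 with hv | hv
  · simp [hv]
  have hsqrt : √(2 * π * (v / (1 + 2 * c * v))) = √(2 * π * v) * (√(1 + 2 * c * v))⁻¹ := by
    rw [← sqrt_inv, ← sqrt_mul (by positivity)]
    ring_nf
  have hexponent : -(x - m) ^ 2 / (2 * v) + -(c * x ^ 2) =
      -(c * m ^ 2 / (1 + 2 * c * v)) + -(x - m / (1 + 2 * c * v)) ^ 2 /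
        (2 * (v / (1 + 2 * c * v))) := by
    field_simp
    ring
  rw [hsqrt, mul_inv, inv_inv, mul_assoc, ← exp_add, hexponent, exp_add]
  field_simp

lemma lintegral_exp_neg_mul_sq_gaussianReal (m : ℝ) (v : ℝ≥0) {c : ℝ} (hc : 0 ≤ c) :
    ∫⁻ x, ENNReal.ofReal (exp (-(c * x ^ 2))) ∂gaussianReal m v =
      ENNReal.ofReal ((√(1 + 2 * c * v))⁻¹ * exp (-(c * m ^ 2 / (1 + 2 * c * v)))) := by
  rcases eq_or_ne v 0 with rfl | hv
  · simp [gaussianReal_zero_var, lintegral_dirac]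
  have hv' : (v / (1 + 2 * c * v)).toNNReal ≠ 0 := by
    have : 0 < (v : ℝ) := by positivity
    simpa using div_pos this (by positivity : (0 : ℝ) < 1 + 2 * c * v)
  rw [gaussianReal_of_var_ne_zero _ hv,
    lintegral_withDensity_eq_lintegral_mul _ (measurable_gaussianPDF _ _) (by fun_prop)]
  have hC : 0 ≤ (√(1 + 2 * c * v))⁻¹ * exp (-(c * m ^ 2 / (1 + 2 * c * v))) := by positivity
  simp_rw [Pi.mul_apply, gaussianPDF, ← ENNReal.ofReal_mul (gaussianPDFReal_nonneg _ _ _),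
    gaussianPDFReal_mul_exp_neg_mul_sq m v hc, ENNReal.ofReal_mul hC]
  rw [lintegral_const_mul _ (measurable_gaussianPDFReal _ _).ennreal_ofReal,
    lintegral_gaussianPDFReal_eq_one _ hv', mul_one]

lemma prod_expMeasure_sub_le {α : Type*} [MeasurableSpace α] (μ : Measure α) [SFinite μ]
    {r : ℝ} (hr : 0 < r) {f : α → ℝ} (hf : Measurable f) {t : ℝ} (hft : ∀ x, t ≤ f x) :
    (μ.prod (expMeasure r)) {p | f p.1 - p.2 ≤ t} =
      ENNReal.ofReal (exp (r * t)) * ∫⁻ x, ENNReal.ofReal (exp (-(r * f x))) ∂μ := by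
  have := isProbabilityMeasure_expMeasure hr
  rw [Measure.prod_apply (measurableSet_le (by fun_prop) measurable_const),
    ← lintegral_const_mul _ (by fun_prop)]
  refine lintegral_congr fun x ↦ ?_
  have hslice : Prod.mk x ⁻¹' {p : α × ℝ | f p.1 - p.2 ≤ t} = Ici (f x - t) := by
    ext u
    simp only [mem_preimage, mem_ofPred_eq, mem_Ici]
    constructor <;> intro h <;> linarith
  rw [hslice, expMeasure_Ici hr (sub_nonneg.mpr (hft x)), ← ENNReal.ofReal_mul (exp_pos _).le,
    ← exp_add]
  congr 2
  ring

lemma lintegral_exp_neg_mul_sum_sq_gaussianReal_prod (a b : ℝ) (v : ℝ≥0) {c : ℝ} (hc : 0 ≤ c) :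
    ∫⁻ q, ENNReal.ofReal (exp (-(c * (q.1 ^ 2 + q.2 ^ 2))))
        ∂(gaussianReal a v).prod (gaussianReal b v) =
      ENNReal.ofReal ((1 + 2 * c * v)⁻¹ * exp (-(c * (a ^ 2 + b ^ 2) / (1 + 2 * c * v)))) := by
  have hsplit (q : ℝ × ℝ) : ENNReal.ofReal (exp (-(c * (q.1 ^ 2 + q.2 ^ 2)))) =
      ENNReal.ofReal (exp (-(c * q.1 ^ 2))) * ENNReal.ofReal (exp (-(c * q.2 ^ 2))) := by
    rw [← ENNReal.ofReal_mul (exp_pos _).le, ← exp_add]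
    congr 2
    ring
  rw [lintegral_congr hsplit, lintegral_prod_mul (f := fun x ↦ ENNReal.ofReal (exp (-(c * x ^ 2))))
      (g := fun x ↦ ENNReal.ofReal (exp (-(c * x ^ 2)))) (by fun_prop) (by fun_prop),
    lintegral_exp_neg_mul_sq_gaussianReal _ _ hc, lintegral_exp_neg_mul_sq_gaussianReal _ _ hc,
    ← ENNReal.ofReal_mul (by positivity), mul_mul_mul_comm, ← mul_inv,
    mul_self_sqrt (by positivity), ← exp_add]
  congr 3
  ring

theorem diff_chiSq_neg_tail_cdf_general (a b σ₁ σ₂ : ℝ) (hσ₂ : 0 < σ₂)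
    (t : ℝ) (ht : t ≤ 0) :
    (((gaussianReal a (σ₁ ^ 2).toNNReal).prod (gaussianReal b (σ₁ ^ 2).toNNReal)).prod
        (expMeasure (1 / (2 * σ₂ ^ 2))))
      {p : (ℝ × ℝ) × ℝ | p.1.1 ^ 2 + p.1.2 ^ 2 - p.2 ≤ t} =
      ENNReal.ofReal ((σ₂ ^ 2 / (σ₁ ^ 2 + σ₂ ^ 2)) * Real.exp (t / (2 * σ₂ ^ 2)) *
        Real.exp (-(a ^ 2 + b ^ 2) / (2 * (σ₁ ^ 2 + σ₂ ^ 2)))) := by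
  set r : ℝ := 1 / (2 * σ₂ ^ 2)
  have hr : 0 < r := by positivity
  have ht_le (q : ℝ × ℝ) : t ≤ q.1 ^ 2 + q.2 ^ 2 := by nlinarith [sq_nonneg q.1, sq_nonneg q.2]
  rw [prod_expMeasure_sub_le _ hr (f := fun q : ℝ × ℝ ↦ q.1 ^ 2 + q.2 ^ 2) (by fun_prop) ht_le,
    lintegral_exp_neg_mul_sum_sq_gaussianReal_prod _ _ _ hr.le, ← ENNReal.ofReal_mul (exp_pos _).le,
    Real.coe_toNNReal _ (sq_nonneg σ₁)]
  congr 1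
  have hD : 1 + 2 * r * σ₁ ^ 2 = (σ₁ ^ 2 + σ₂ ^ 2) / σ₂ ^ 2 := by
    simp only [r]; field_simp; ring
  have hexponent : r * (a ^ 2 + b ^ 2) / ((σ₁ ^ 2 + σ₂ ^ 2) / σ₂ ^ 2) =
      (a ^ 2 + b ^ 2) / (2 * (σ₁ ^ 2 + σ₂ ^ 2)) := by
    simp only [r]; field_simp
  rw [hD, inv_div, hexponent, one_div_mul_eq_div, neg_div]
  ring

/-- Negative-tail CDF of the difference `T = x² + y² - u` between a scaled noncentral
χ²(2) statistic and an independent exponential variable: for `t ≤ 0`,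
`μ{T ≤ t} = (σ₂²/(σ₁²+σ₂²)) · e^{t/(2σ₂²)} · e^{-(a²+b²)/(2(σ₁²+σ₂²))}`. -/
theorem diff_chiSq_neg_tail_cdf (a b σ₁ σ₂ : ℝ) (hσ₁ : 0 < σ₁) (hσ₂ : 0 < σ₂)
    (t : ℝ) (ht : t ≤ 0) :
    (((gaussianReal a (σ₁ ^ 2).toNNReal).prod (gaussianReal b (σ₁ ^ 2).toNNReal)).prod
        (expMeasure (1 / (2 * σ₂ ^ 2))))
      {p : (ℝ × ℝ) × ℝ | p.1.1 ^ 2 + p.1.2 ^ 2 - p.2 ≤ t} =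
      ENNReal.ofReal ((σ₂ ^ 2 / (σ₁ ^ 2 + σ₂ ^ 2)) * Real.exp (t / (2 * σ₂ ^ 2)) *
        Real.exp (-(a ^ 2 + b ^ 2) / (2 * (σ₁ ^ 2 + σ₂ ^ 2)))) :=
  diff_chiSq_neg_tail_cdf_general a b σ₁ σ₂ hσ₂ t ht
end

section
/- Let a, b ∈ ℝ and σ > 0. The pushforward of the product measure N(a, σ²) ⊗ N(b, σ²) under the map (x, y) ↦ x² + y² is the measure on ℝ with Lebesgue density s ↦ (1/(2σ²)) · exp(−(s + a² + b²)/(2σ²)) · I₀(√((a² + b²)·s)/σ²) for s ≥ 0 (and density 0 for s < 0). -/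
open MeasureTheory ProbabilityTheory

/-- The modified Bessel function of the first kind of order zero,
`I₀(x) = ∑_{k=0}^∞ (x/2)^(2k) / (k!)²`. -/
noncomputable def besselI0 (x : ℝ) : ℝ :=
  ∑' k : ℕ, (x / 2) ^ (2 * k) / ((Nat.factorial k : ℝ)) ^ 2

/-!
In polar coordinates `(x, y) = (r cos θ, r sin θ)` the product Gaussian density is
`(2πσ²)⁻¹ e^{-(r² + a² + b²)/(2σ²)} e^{(r/σ²)(a cos θ + b sin θ)}`, and `a cos θ + b sin θ` is
`√(a² + b²) cos (θ - φ)` for a phase `φ`. Integrating the exponential series term by term, with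
`∫_{-π}^{π} cos^{2k} = 2π (2k)! / (4^k (k!)²)` and the odd moments vanishing, gives
`∫_{-π}^{π} e^{R cos θ} dθ = 2π I₀(R)`. The radial variable is then traded for `s = r²`,
with `ds = 2r dr`.
-/

open Real Set ENNReal
open scoped Nat NNReal

theorem integral_cos_pow_add_two_neg_pi_pi (n : ℕ) :
    ∫ θ in -π..π, cos θ ^ (n + 2) = (n + 1) / (n + 2) * ∫ θ in -π..π, cos θ ^ n := by
  simp [integral_cos_pow]

theorem integral_cos_pow_odd_neg_pi_pi (k : ℕ) : ∫ θ in -π..π, cos θ ^ (2 * k + 1) = 0 := by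
  induction k with
  | zero => simp
  | succ k ih => rw [show 2 * (k + 1) + 1 = 2 * k + 1 + 2 by ring,
      integral_cos_pow_add_two_neg_pi_pi, ih, mul_zero]

theorem integral_cos_pow_even_neg_pi_pi (k : ℕ) :
    ∫ θ in -π..π, cos θ ^ (2 * k) = 2 * π * (2 * k)! / (4 ^ k * (k ! : ℝ) ^ 2) := by
  induction k with
  | zero => simp [two_mul]
  | succ k ih =>
    rw [show 2 * (k + 1) = 2 * k + 2 by ring, integral_cos_pow_add_two_neg_pi_pi, ih]
    push_cast [Nat.factorial_succ]
    field_simp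
    ring

theorem hasSum_integral_exp_mul_cos (R : ℝ) :
    HasSum (fun n : ℕ => R ^ n / n ! * ∫ θ in -π..π, cos θ ^ n)
      (∫ θ in -π..π, exp (R * cos θ)) := by
  have hterm (n : ℕ) : R ^ n / n ! * ∫ θ in -π..π, cos θ ^ n
      = ∫ θ in -π..π, (R * cos θ) ^ n / n ! := by
    simp_rw [mul_pow, mul_div_right_comm]
    exact (intervalIntegral.integral_const_mul _ _).symm
  simp_rw [hterm]
  refine intervalIntegral.hasSum_integral_of_dominated_convergence
    (fun n _ => |R| ^ n / n !) (fun n => by fun_prop) (fun n => ?_)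
    (.of_forall fun _ _ => summable_pow_div_factorial |R|) intervalIntegrable_const
    (.of_forall fun θ _ => by simpa [exp_eq_exp_ℝ] using
      NormedSpace.expSeries_div_hasSum_exp (R * cos θ))
  refine .of_forall fun θ _ => ?_
  rw [norm_div, norm_pow, norm_mul, Real.norm_natCast, Real.norm_eq_abs, Real.norm_eq_abs]
  gcongr
  exact mul_le_of_le_one_right (abs_nonneg R) (abs_cos_le_one θ)

theorem integral_exp_mul_cos (R : ℝ) : ∫ θ in -π..π, exp (R * cos θ) = 2 * π * besselI0 R := by
  have heven (k : ℕ) : R ^ (2 * k) / (2 * k)! * ∫ θ in -π..π, cos θ ^ (2 * k)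
      = 2 * π * ((R / 2) ^ (2 * k) / (k ! : ℝ) ^ 2) := by
    rw [integral_cos_pow_even_neg_pi_pi, div_pow, pow_mul 2, show (2 : ℝ) ^ 2 = 4 by norm_num]
    field_simp
  have hsum := hasSum_integral_exp_mul_cos R
  rw [← (mul_right_injective₀ (two_ne_zero' ℕ)).hasSum_iff] at hsum
  · simp only [Function.comp_def, heven] at hsum
    rw [besselI0, ← tsum_mul_left, hsum.tsum_eq]
  · intro n hn
    obtain ⟨k, rfl⟩ : Odd n := Nat.not_even_iff_odd.mp fun ⟨k, hk⟩ => hn ⟨k, by simp only; omega⟩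
    rw [integral_cos_pow_odd_neg_pi_pi, mul_zero]

theorem integral_exp_mul_cos_add_mul_sin (p q : ℝ) :
    ∫ θ in -π..π, exp (p * cos θ + q * sin θ) = 2 * π * besselI0 (√(p ^ 2 + q ^ 2)) := by
  set z : ℂ := ⟨p, q⟩
  have hrot (θ : ℝ) : p * cos θ + q * sin θ = ‖z‖ * cos (θ - z.arg) := by
    have hre : ‖z‖ * cos z.arg = p := Complex.norm_mul_cos_arg z
    have him : ‖z‖ * sin z.arg = q := Complex.norm_mul_sin_arg z
    rw [cos_sub, ← hre, ← him]
    ring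
  have hper : Function.Periodic (fun θ => exp (‖z‖ * cos θ)) (2 * π) := fun θ => by
    simp only [cos_add_two_pi]
  have hnorm : ‖z‖ = √(p ^ 2 + q ^ 2) := by
    rw [Complex.norm_def, Complex.normSq_mk, sq, sq]
  simp_rw [hrot]
  rw [intervalIntegral.integral_comp_sub_right (fun θ => exp (‖z‖ * cos θ)),
    show π - z.arg = -π - z.arg + 2 * π by ring, hper.intervalIntegral_add_eq,
    show -π + 2 * π = π by ring, integral_exp_mul_cos, hnorm]

theorem gaussianPDFReal_mul_gaussianPDFReal_polar (a b r θ : ℝ) {v : ℝ≥0} (hv : v ≠ 0) :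
    gaussianPDFReal a v (r * cos θ) * gaussianPDFReal b v (r * sin θ) =
      (2 * π * v)⁻¹ * exp (-(r ^ 2 + a ^ 2 + b ^ 2) / (2 * v)) *
        exp (r * a / v * cos θ + r * b / v * sin θ) := by
  have hv' : (v : ℝ) ≠ 0 := by exact_mod_cast hv
  have hsqrt : (√(2 * π * v))⁻¹ * (√(2 * π * v))⁻¹ = (2 * π * v)⁻¹ := by
    rw [← mul_inv, mul_self_sqrt (by positivity)]
  simp only [gaussianPDFReal]
  rw [mul_mul_mul_comm, hsqrt, ← exp_add, mul_assoc _ (exp _), ← exp_add]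
  congr 2
  field_simp
  linear_combination (-r ^ 2) * sin_sq_add_cos_sq θ

theorem integral_gaussianPDFReal_mul_gaussianPDFReal_polar (a b : ℝ) {r : ℝ} (hr : 0 ≤ r)
    {v : ℝ≥0} (hv : v ≠ 0) :
    ∫ θ in -π..π, gaussianPDFReal a v (r * cos θ) * gaussianPDFReal b v (r * sin θ) =
      (v : ℝ)⁻¹ * exp (-(r ^ 2 + a ^ 2 + b ^ 2) / (2 * v)) *
        besselI0 (r * √(a ^ 2 + b ^ 2) / v) := by
  have hv' : (v : ℝ) ≠ 0 := by exact_mod_cast hv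
  have hnorm : √((r * a / v) ^ 2 + (r * b / v) ^ 2) = r * √(a ^ 2 + b ^ 2) / v := by
    rw [show (r * a / v) ^ 2 + (r * b / v) ^ 2 = (r / v) ^ 2 * (a ^ 2 + b ^ 2) by ring,
      sqrt_mul (sq_nonneg _), sqrt_sq (div_nonneg hr v.coe_nonneg)]
    ring
  simp_rw [gaussianPDFReal_mul_gaussianPDFReal_polar a b r _ hv]
  rw [intervalIntegral.integral_const_mul, integral_exp_mul_cos_add_mul_sin, hnorm]
  field_simp

theorem lintegral_Ioo_ofReal_eq_ofReal_intervalIntegral {F : ℝ → ℝ} {a b : ℝ} (hab : a ≤ b)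
    (hF : Continuous F) (hF₀ : ∀ x, 0 ≤ F x) :
    ∫⁻ x in Ioo a b, ENNReal.ofReal (F x) = ENNReal.ofReal (∫ x in a..b, F x) := by
  rw [intervalIntegral.integral_of_le hab, integral_Ioc_eq_integral_Ioo,
    ofReal_integral_eq_lintegral_ofReal (hF.integrableOn_Icc.mono_set Ioo_subset_Icc_self)
      (.of_forall hF₀)]

theorem lintegral_eq_lintegral_polar (f : ℝ × ℝ → ℝ≥0∞) (hf : Measurable f) :
    ∫⁻ p, f p =
      ∫⁻ r in Ioi 0, ∫⁻ θ in Ioo (-π) π, ENNReal.ofReal r * f (r * cos θ, r * sin θ) := by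
  rw [← lintegral_comp_polarCoord_symm, polarCoord_target, Measure.volume_eq_prod,
    ← Measure.prod_restrict, lintegral_prod _ (by fun_prop)]
  rfl

theorem lintegral_Ioi_eq_lintegral_Ioi_comp_sq (g : ℝ → ℝ≥0∞) :
    ∫⁻ s in Ioi 0, g s = ∫⁻ r in Ioi 0, ENNReal.ofReal (2 * r) * g (r ^ 2) := by
  have himage : (fun r : ℝ => r ^ 2) '' Ioi 0 = Ioi 0 := by
    ext s
    refine ⟨fun ⟨r, hr, hrs⟩ => hrs ▸ pow_pos (mem_Ioi.mp hr) 2,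
      fun hs => ⟨√s, sqrt_pos.mpr hs, sq_sqrt (mem_Ioi.mp hs).le⟩⟩
  conv_lhs => rw [← himage]
  rw [lintegral_image_eq_lintegral_abs_deriv_mul measurableSet_Ioi
    (fun r _ => by simpa using (hasDerivAt_pow 2 r).hasDerivWithinAt)
    ((pow_left_strictMonoOn₀ two_ne_zero).mono Ioi_subset_Ici_self).injOn]
  refine setLIntegral_congr_fun measurableSet_Ioi fun r hr => ?_
  rw [abs_of_pos (by simpa using hr)]

theorem map_sq_add_sq_withDensity (f : ℝ × ℝ → ℝ≥0∞) (hf : Measurable f) :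
    (volume.withDensity f).map (fun p : ℝ × ℝ => p.1 ^ 2 + p.2 ^ 2) =
      volume.withDensity ((Ici 0).indicator fun s =>
        2⁻¹ * ∫⁻ θ in Ioo (-π) π, f (√s * cos θ, √s * sin θ)) := by
  set g : ℝ → ℝ≥0∞ := fun s => 2⁻¹ * ∫⁻ θ in Ioo (-π) π, f (√s * cos θ, √s * sin θ)
  ext A hA
  have hA' : MeasurableSet ((fun p : ℝ × ℝ => p.1 ^ 2 + p.2 ^ 2) ⁻¹' A) :=
    hA.preimage (by fun_prop)
  rw [Measure.map_apply (by fun_prop) hA, withDensity_apply _ hA', withDensity_apply _ hA,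
    ← lintegral_indicator hA', lintegral_eq_lintegral_polar _ (hf.indicator hA'),
    ← lintegral_indicator hA, indicator_indicator, inter_comm, ← indicator_indicator,
    lintegral_indicator measurableSet_Ici, setLIntegral_congr Ioi_ae_eq_Ici.symm,
    lintegral_Ioi_eq_lintegral_Ioi_comp_sq (A.indicator g)]
  refine setLIntegral_congr_fun measurableSet_Ioi fun r hr => ?_
  have hpolar (θ : ℝ) : (r * cos θ) ^ 2 + (r * sin θ) ^ 2 = r ^ 2 := by
    linear_combination r ^ 2 * sin_sq_add_cos_sq θ
  by_cases hrA : r ^ 2 ∈ A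
  · have hmem (θ : ℝ) : (r * cos θ, r * sin θ) ∈ (fun p : ℝ × ℝ => p.1 ^ 2 + p.2 ^ 2) ⁻¹' A := by
      simpa [hpolar] using hrA
    simp only [indicator_of_mem (hmem _), indicator_of_mem hrA, g, sqrt_sq (le_of_lt hr)]
    rw [lintegral_const_mul' _ _ ofReal_ne_top, ← mul_assoc, ofReal_mul zero_le_two,
      ofReal_ofNat, mul_right_comm 2, ENNReal.mul_inv_cancel two_ne_zero ofNat_ne_top, one_mul]
  · have hnmem (θ : ℝ) : (r * cos θ, r * sin θ) ∉ (fun p : ℝ × ℝ => p.1 ^ 2 + p.2 ^ 2) ⁻¹' A := by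
      simpa [hpolar] using hrA
    simp only [indicator_of_notMem (hnmem _), indicator_of_notMem hrA, mul_zero, lintegral_zero]

/-- The pushforward of `N(a,σ²) ⊗ N(b,σ²)` under `(x,y) ↦ x² + y²` is the scaled
noncentral χ²(2) distribution, with Lebesgue density
`s ↦ (1/(2σ²)) e^{-(s+a²+b²)/(2σ²)} I₀(√((a²+b²)s)/σ²)` for `s ≥ 0` (and `0` for `s < 0`). -/
theorem noncentral_chiSq_two_density (a b σ : ℝ) (hσ : 0 < σ) :
    Measure.map (fun p : ℝ × ℝ => p.1 ^ 2 + p.2 ^ 2)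
        ((gaussianReal a (σ ^ 2).toNNReal).prod (gaussianReal b (σ ^ 2).toNNReal)) =
      volume.withDensity (fun s =>
        ENNReal.ofReal (if 0 ≤ s then
          (1 / (2 * σ ^ 2)) * Real.exp (-(s + a ^ 2 + b ^ 2) / (2 * σ ^ 2)) *
            besselI0 (Real.sqrt ((a ^ 2 + b ^ 2) * s) / σ ^ 2)
        else 0)) := by
  set v := (σ ^ 2).toNNReal
  have hv : (v : ℝ) = σ ^ 2 := Real.coe_toNNReal _ (sq_nonneg σ)
  have hv₀ : v ≠ 0 := by simpa [v] using hσ.ne'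
  rw [gaussianReal_of_var_ne_zero a hv₀, gaussianReal_of_var_ne_zero b hv₀,
    prod_withDensity (measurable_gaussianPDF _ _) (measurable_gaussianPDF _ _),
    ← Measure.volume_eq_prod, map_sq_add_sq_withDensity _ (by fun_prop)]
  congr 1
  funext s
  by_cases hs : 0 ≤ s
  · simp only [indicator_of_mem (mem_Ici.mpr hs), if_pos hs, gaussianPDF,
      ← ofReal_mul (gaussianPDFReal_nonneg _ _ _)]
    rw [lintegral_Ioo_ofReal_eq_ofReal_intervalIntegral (neg_le_self pi_pos.le)
      (by unfold gaussianPDFReal; fun_prop)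
      (fun θ => mul_nonneg (gaussianPDFReal_nonneg _ _ _) (gaussianPDFReal_nonneg _ _ _)),
      integral_gaussianPDFReal_mul_gaussianPDFReal_polar a b (sqrt_nonneg s) hv₀,
      hv, sq_sqrt hs, sqrt_mul (by positivity) s, mul_comm √s, ← ofReal_ofNat 2,
      ← ofReal_inv_of_pos two_pos, ← ofReal_mul (by norm_num)]
    ring_nf
  · simp [hs]
end

section
/- Let p > 0, c ≥ 0, and t ≥ 0. Then ∫_t^∞ exp(−p·s) · I₀(c·√s) ds = (1/p) · exp(c²/(4p)) · Q₁(c/√(2p), √(2pt)). -/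
open MeasureTheory

/-- The first-order Marcum Q-function, `Q₁(α, β) = ∫_β^∞ x e^{-(x²+α²)/2} I₀(αx) dx`. -/
noncomputable def marcumQ1 (α β : ℝ) : ℝ :=
  ∫ x in Set.Ici β, x * Real.exp (-(x ^ 2 + α ^ 2) / 2) * besselI0 (α * x)

/-!
The substitution `s = x² / (2p)` turns `e^{-ps}` into `e^{-x²/2}` and `I₀(c√s)` into `I₀(αx)` with
`α = c/√(2p)`; the missing factor `e^{-α²/2} = e^{-c²/(4p)}` of the Marcum integrand is the constant
in front. The substitution is carried out in two steps, `y = x²` and `y = 2ps`.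
-/

open Set Real

theorem integral_comp_sq_Ioi {E : Type*} [NormedAddCommGroup E] [NormedSpace ℝ E]
    (g : ℝ → E) {c : ℝ} (hc : 0 ≤ c) :
    ∫ x in Ioi √c, (2 * x) • g (x ^ 2) = ∫ y in Ioi c, g y := by
  have h := integral_comp_rpow_Ioi_of_pos' (g := g) two_pos hc
  norm_num [← sqrt_eq_rpow] at h
  simpa [rpow_two] using h

theorem marcumQ1_sqrt_eq_integral_Ioi (α : ℝ) {b : ℝ} (hb : 0 ≤ b) :
    marcumQ1 α √b = (1 / 2) * ∫ y in Ioi b, exp (-(y + α ^ 2) / 2) * besselI0 (α * √y) := by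
  rw [marcumQ1, integral_Ici_eq_integral_Ioi, ← integral_comp_sq_Ioi _ hb, ← integral_const_mul]
  refine setIntegral_congr_fun measurableSet_Ioi fun x hx ↦ ?_
  have hx₀ : 0 ≤ x := (sqrt_nonneg b).trans (le_of_lt hx)
  simp only [smul_eq_mul, sqrt_sq hx₀]
  ring

theorem integral_exp_mul_besselI0_general (p c t : ℝ) (hp : 0 < p) (ht : 0 ≤ t) :
    ∫ s in Set.Ici t, Real.exp (-p * s) * besselI0 (c * Real.sqrt s) =
      (1 / p) * Real.exp (c ^ 2 / (4 * p)) *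
        marcumQ1 (c / Real.sqrt (2 * p)) (Real.sqrt (2 * p * t)) := by
  set α := c / √(2 * p)
  set g : ℝ → ℝ := fun y ↦ exp (-(y + α ^ 2) / 2) * besselI0 (α * √y)
  have hg : ∀ s, g (2 * p * s) =
      exp (-(c ^ 2 / (4 * p))) * (exp (-p * s) * besselI0 (c * √s)) := by
    intro s
    have hαs : α * √(2 * p * s) = c * √s := by
      rw [sqrt_mul (by positivity), ← mul_assoc, div_mul_cancel₀ _ (by positivity)]
    have hα2 : α ^ 2 = c ^ 2 / (2 * p) := by rw [div_pow, sq_sqrt (by positivity)]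
    simp only [g, hαs, ← mul_assoc, ← exp_add, hα2]
    congr 3
    field_simp
    ring
  rw [marcumQ1_sqrt_eq_integral_Ioi α (by positivity),
    ← integral_comp_mul_left_Ioi' g t (by positivity), integral_Ici_eq_integral_Ioi]
  simp only [hg, integral_const_mul, smul_eq_mul, exp_neg]
  field_simp

/-- Incomplete Laplace transform of `I₀`: for `p > 0`, `c ≥ 0`, `t ≥ 0`,
`∫_t^∞ e^{-ps} I₀(c√s) ds = (1/p) e^{c²/(4p)} Q₁(c/√(2p), √(2pt))`. -/
theorem integral_exp_mul_besselI0 (p c t : ℝ) (hp : 0 < p) (hc : 0 ≤ c) (ht : 0 ≤ t) :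
    ∫ s in Set.Ici t, Real.exp (-p * s) * besselI0 (c * Real.sqrt s) =
      (1 / p) * Real.exp (c ^ 2 / (4 * p)) *
        marcumQ1 (c / Real.sqrt (2 * p)) (Real.sqrt (2 * p * t)) :=
  integral_exp_mul_besselI0_general p c t hp ht
end

section
/- Let a, b ∈ ℝ, σ₁ > 0, σ₂ > 0, and t ≥ 0. Then ∫_0^∞ (1/(2σ₁²)) · exp(−(t + u + a² + b²)/(2σ₁²)) · I₀(√((a² + b²)(t + u))/σ₁²) · (1/(2σ₂²)) · exp(−u/(2σ₂²)) du = (1/(2(σ₁² + σ₂²))) · exp(t/(2σ₂²)) · exp(−(a² + b²)/(2(σ₁² + σ₂²))) · Q₁((√(a² + b²)·σ₂)/(σ₁·√(σ₁² + σ₂²)), √(t(σ₁² + σ₂²))/(σ₁σ₂)). -/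
/-!
Substituting `t + u = k x²` with `k = σ₁²σ₂² / (σ₁² + σ₂²)` and `x` running over
`(√(t / k), ∞)` turns the convolution integral into the Marcum integral: the Jacobian `2 k x`
supplies the factor `x`, the Bessel argument becomes `α x`, and since `1 / k = 1 / σ₁² + 1 / σ₂²`
the two exponents combine into `-(x² + α²) / 2` plus a constant.
-/

open MeasureTheory

open Set

theorem integral_Ioi_zero_eq_integral_Ioi_comp_quadratic {E : Type*} [NormedAddCommGroup E]
    [NormedSpace ℝ E] (f : ℝ → E) {k β : ℝ} (hk : 0 < k) (hβ : 0 ≤ β) :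
    ∫ u in Ioi 0, f u = ∫ x in Ioi β, (2 * k * x) • f (k * (x ^ 2 - β ^ 2)) := by
  have hmono : StrictMonoOn (fun x => k * (x ^ 2 - β ^ 2)) (Ioi β) := fun x hx _ _ hxy =>
    mul_lt_mul_of_pos_left
      (sub_lt_sub_right (pow_lt_pow_left₀ hxy (hβ.trans (mem_Ioi.1 hx).le) two_ne_zero) _) hk
  have himage : (fun x => k * (x ^ 2 - β ^ 2)) '' Ioi β = Ioi 0 := by
    refine Subset.antisymm ?_ fun u hu => ?_
    · rintro _ ⟨x, hx, rfl⟩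
      exact mul_pos hk (sub_pos.2 (pow_lt_pow_left₀ hx hβ two_ne_zero))
    · have hu' : 0 < u / k := div_pos hu hk
      refine ⟨√(u / k + β ^ 2), (Real.lt_sqrt hβ).2 (by linarith), ?_⟩
      dsimp only
      rw [Real.sq_sqrt (by positivity), add_sub_cancel_right, mul_div_cancel₀ _ hk.ne']
  have hderiv : ∀ x ∈ Ioi β,
      HasDerivWithinAt (fun x => k * (x ^ 2 - β ^ 2)) (2 * k * x) (Ioi β) x := fun x _ => by
    simpa [mul_comm, mul_left_comm] using
      (((hasDerivAt_pow 2 x).sub_const (β ^ 2)).const_mul k).hasDerivWithinAt (s := Ioi β)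
  rw [← himage, integral_image_eq_integral_abs_deriv_smul measurableSet_Ioi hderiv hmono.injOn]
  refine setIntegral_congr_fun measurableSet_Ioi fun x hx => ?_
  rw [abs_of_pos (by have := hβ.trans_lt hx; positivity)]

section ConvolutionIntegrand

variable {a b σ₁ σ₂ : ℝ}

theorem sqrt_mul_sq_div_sq_eq (hσ₁ : 0 < σ₁) (hσ₂ : 0 < σ₂) {x : ℝ} (hx : 0 ≤ x) :
    √((a ^ 2 + b ^ 2) * (σ₁ ^ 2 * σ₂ ^ 2 / (σ₁ ^ 2 + σ₂ ^ 2) * x ^ 2)) / σ₁ ^ 2 =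
      √(a ^ 2 + b ^ 2) * σ₂ / (σ₁ * √(σ₁ ^ 2 + σ₂ ^ 2)) * x := by
  have hS : 0 < √(σ₁ ^ 2 + σ₂ ^ 2) := by positivity
  rw [Real.sqrt_mul (by positivity), Real.sqrt_mul (by positivity), Real.sqrt_div (by positivity),
    Real.sqrt_sq hx, Real.sqrt_mul (by positivity), Real.sqrt_sq hσ₁.le, Real.sqrt_sq hσ₂.le]
  field_simp

theorem convolution_exponent_eq (hσ₁ : 0 < σ₁) (hσ₂ : 0 < σ₂) {k t α β x : ℝ}
    (hk : k = σ₁ ^ 2 * σ₂ ^ 2 / (σ₁ ^ 2 + σ₂ ^ 2)) (ht : k * β ^ 2 = t)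
    (hα : α ^ 2 = (a ^ 2 + b ^ 2) * σ₂ ^ 2 / (σ₁ ^ 2 * (σ₁ ^ 2 + σ₂ ^ 2))) :
    -(t + k * (x ^ 2 - β ^ 2) + a ^ 2 + b ^ 2) / (2 * σ₁ ^ 2) +
        -(k * (x ^ 2 - β ^ 2)) / (2 * σ₂ ^ 2) =
      t / (2 * σ₂ ^ 2) + -(a ^ 2 + b ^ 2) / (2 * (σ₁ ^ 2 + σ₂ ^ 2)) + -(x ^ 2 + α ^ 2) / 2 := by
  subst hk ht
  rw [hα]
  field_simp
  ring

theorem jacobian_mul_convolution_integrand_eq (hσ₁ : 0 < σ₁) (hσ₂ : 0 < σ₂) {k t α β x : ℝ}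
    (hk : k = σ₁ ^ 2 * σ₂ ^ 2 / (σ₁ ^ 2 + σ₂ ^ 2)) (ht : k * β ^ 2 = t)
    (hα : α = √(a ^ 2 + b ^ 2) * σ₂ / (σ₁ * √(σ₁ ^ 2 + σ₂ ^ 2))) (hx : 0 ≤ x) :
    (2 * k * x) * ((1 / (2 * σ₁ ^ 2)) *
        Real.exp (-(t + k * (x ^ 2 - β ^ 2) + a ^ 2 + b ^ 2) / (2 * σ₁ ^ 2)) *
        besselI0 (√((a ^ 2 + b ^ 2) * (t + k * (x ^ 2 - β ^ 2))) / σ₁ ^ 2) *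
        ((1 / (2 * σ₂ ^ 2)) * Real.exp (-(k * (x ^ 2 - β ^ 2)) / (2 * σ₂ ^ 2)))) =
      (1 / (2 * (σ₁ ^ 2 + σ₂ ^ 2))) * Real.exp (t / (2 * σ₂ ^ 2)) *
        Real.exp (-(a ^ 2 + b ^ 2) / (2 * (σ₁ ^ 2 + σ₂ ^ 2))) *
        (x * Real.exp (-(x ^ 2 + α ^ 2) / 2) * besselI0 (α * x)) := by
  have hα_sq : α ^ 2 = (a ^ 2 + b ^ 2) * σ₂ ^ 2 / (σ₁ ^ 2 * (σ₁ ^ 2 + σ₂ ^ 2)) := by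
    rw [hα, div_pow, mul_pow, mul_pow, Real.sq_sqrt (by positivity), Real.sq_sqrt (by positivity)]
  have hbessel : √((a ^ 2 + b ^ 2) * (t + k * (x ^ 2 - β ^ 2))) / σ₁ ^ 2 = α * x := by
    rw [← ht, show k * β ^ 2 + k * (x ^ 2 - β ^ 2) = k * x ^ 2 by ring, hk,
      sqrt_mul_sq_div_sq_eq hσ₁ hσ₂ hx, hα]
  have hexp := congrArg Real.exp (convolution_exponent_eq (x := x) hσ₁ hσ₂ hk ht hα_sq)
  simp only [Real.exp_add] at hexp
  rw [hbessel]
  linear_combination (norm := skip) (x * besselI0 (α * x) / (2 * (σ₁ ^ 2 + σ₂ ^ 2))) * hexp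
  rw [hk]
  field_simp
  ring

end ConvolutionIntegrand

/-- Convolution integral giving the nonnegative-branch density of the difference
`T = T₁ - T₂` between a scaled noncentral χ²(2) variable (scale `σ₁²`, noncentrality
`a²+b²`) and an independent exponential variable with mean `2σ₂²`: for `t ≥ 0`,
the density at `t` equals the stated Marcum-Q expression. -/
theorem density_diff_chiSq_marcumQ (a b σ₁ σ₂ t : ℝ) (hσ₁ : 0 < σ₁) (hσ₂ : 0 < σ₂)
    (ht : 0 ≤ t) :
    ∫ u in Set.Ici (0 : ℝ),
        (1 / (2 * σ₁ ^ 2)) * Real.exp (-(t + u + a ^ 2 + b ^ 2) / (2 * σ₁ ^ 2)) *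
          besselI0 (Real.sqrt ((a ^ 2 + b ^ 2) * (t + u)) / σ₁ ^ 2) *
          ((1 / (2 * σ₂ ^ 2)) * Real.exp (-u / (2 * σ₂ ^ 2))) =
      (1 / (2 * (σ₁ ^ 2 + σ₂ ^ 2))) * Real.exp (t / (2 * σ₂ ^ 2)) *
        Real.exp (-(a ^ 2 + b ^ 2) / (2 * (σ₁ ^ 2 + σ₂ ^ 2))) *
        marcumQ1 ((Real.sqrt (a ^ 2 + b ^ 2) * σ₂) / (σ₁ * Real.sqrt (σ₁ ^ 2 + σ₂ ^ 2)))
          (Real.sqrt (t * (σ₁ ^ 2 + σ₂ ^ 2)) / (σ₁ * σ₂)) := by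
  set k := σ₁ ^ 2 * σ₂ ^ 2 / (σ₁ ^ 2 + σ₂ ^ 2) with hk
  set β := √(t * (σ₁ ^ 2 + σ₂ ^ 2)) / (σ₁ * σ₂)
  have hk_pos : 0 < k := by positivity
  have hβ_nonneg : 0 ≤ β := by positivity
  have hβ_sq : k * β ^ 2 = t := by
    rw [hk, div_pow, Real.sq_sqrt (by positivity)]
    field_simp
  rw [integral_Ici_eq_integral_Ioi,
    integral_Ioi_zero_eq_integral_Ioi_comp_quadratic _ hk_pos hβ_nonneg,
    marcumQ1, integral_Ici_eq_integral_Ioi, ← integral_const_mul]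
  refine setIntegral_congr_fun measurableSet_Ioi fun x hx => ?_
  exact jacobian_mul_convolution_integrand_eq hσ₁ hσ₂ hk hβ_sq rfl
    (hβ_nonneg.trans (mem_Ioi.1 hx).le)
end
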